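/- Let a, a' ∈ ℂ((z))[[λ]] satisfy z·a ∈ ℂ[[z,λ]], z·a' ∈ ℂ[[z,λ]], res_{z=0} a = res_{z=0} a' = −λ/2, and a(z,0) = a'(z,0). Then there exists a unit r of ℂ[[z,λ]] such that a' = a + λ·r⁻¹·(dr/dz). -/

import Mathlib

open PowerSeries

noncomputable section

/-- `K = ℂ((z))`, the field of formal Laurent series. -/
abbrev K : Type := LaurentSeries ℂ

/-- The formal derivative `d/dz` on Laurent series. -/
def lD (f : K) : K where
  coeff n := ((n : ℂ) + 1) * f.coeff (n + 1)
  isPWO_support' := by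
    apply Set.IsPWO.mono ((f.isPWO_support).image_of_monotone
      (f := fun m : ℤ => m - 1) (fun a b hab => by simpa using hab))
    intro n hn
    refine ⟨n + 1, ?_, by ring⟩
    intro h0
    apply hn
    simp [h0]

/-- `ℂ[[z]]` viewed as a subring of `ℂ((z))`. -/
def Oz : Subring K := (HahnSeries.ofPowerSeries ℤ ℂ).range

/-- `h ∈ ℂ[[z]]` has a simple zero at `z = 0`. -/
def SimpleZero (h : PowerSeries ℂ) : Prop :=
  PowerSeries.coeff (R := ℂ) 0 h = 0 ∧ PowerSeries.coeff (R := ℂ) 1 h ≠ 0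

/-- `K̂ = ℂ((z))[[λ]]`, formal power series in `λ` with Laurent series coefficients. -/
abbrev Khat : Type := PowerSeries K

/-- The `λ`-coefficientwise formal derivative `d/dz` on `ℂ((z))[[λ]]`. -/
def pD (F : Khat) : Khat := PowerSeries.mk fun i => lD (PowerSeries.coeff (R := K) i F)

/-- `F ∈ ℂ[[z,λ]]`: every `λ`-coefficient of `F` lies in `ℂ[[z]]`. -/
def MemOhat (F : Khat) : Prop := ∀ i, PowerSeries.coeff (R := K) i F ∈ Oz

/-- The `λ`-gauge transform `Gauge_λ(A,R) = R⁻¹AR + λ·R⁻¹·(dR/dz)`. -/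
def lamGauge (A R : Matrix (Fin 2) (Fin 2) Khat) : Matrix (Fin 2) (Fin 2) Khat :=
  R⁻¹ * A * R + (PowerSeries.X : Khat) • (R⁻¹ * R.map pD)

/-- The constant term in `λ`: `F(z,0)`. -/
def ev0 : Khat →+* K := PowerSeries.constantCoeff (R := K)

/-- The residue of a Laurent series: the coefficient of `z⁻¹`. -/
def res (f : K) : ℂ := f.coeff (-1)

/-- The residue of an element of `ℂ((z))[[λ]]`, an element of `ℂ[[λ]]`. -/
def resHat (F : Khat) : PowerSeries ℂ := PowerSeries.mk fun i => res (PowerSeries.coeff (R := K) i F)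

/-- The Laurent series `z`. -/
def zK : K := HahnSeries.ofPowerSeries ℤ ℂ PowerSeries.X

/-- `-λ/2` as an element of `ℂ[[λ]]`. -/
def negHalfLam : PowerSeries ℂ := -(PowerSeries.C (R := ℂ) (1 / 2) * PowerSeries.X)

/-!
The difference `b = a' - a` has at most a simple pole at `z = 0` with vanishing residue, so it lies
in `ℂ[[z,λ]]`, and it vanishes at `λ = 0`, so `b = λ·g` with `g ∈ ℂ[[z,λ]]`. Reading `g` as a power
series in `z` over `ℂ[[λ]]`, the series `r = exp (∫₀ᶻ g)` is a unit with `dr/dz = g·r`, hence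
`λ·r⁻¹·dr/dz = λ·g = b`.
-/

namespace PowerSeries

section LinearODE

variable {A : Type*} [CommRing A] [Algebra ℚ A]

def integral (g : A⟦X⟧) : A⟦X⟧ := X * mk fun n => (n + 1 : ℚ)⁻¹ • coeff n g

theorem constantCoeff_integral (g : A⟦X⟧) : constantCoeff (integral g) = 0 := by
  simp [integral]

theorem derivative_integral (g : A⟦X⟧) : d⁄dX A (integral g) = g := by
  ext n
  rw [coeff_derivative, integral, coeff_succ_X_mul, coeff_mk, smul_mul_assoc]
  have : (n + 1 : A) = algebraMap ℚ A (n + 1) := by simp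
  rw [this, mul_comm, ← Algebra.smul_def, smul_smul, inv_mul_cancel₀ (by positivity), one_smul]

theorem exists_isUnit_derivative_eq_mul (g : A⟦X⟧) :
    ∃ r : A⟦X⟧, IsUnit r ∧ d⁄dX A r = g * r := by
  have hs : HasSubst (integral g) := HasSubst.of_constantCoeff_zero' (constantCoeff_integral g)
  refine ⟨(exp A).subst (integral g), ?_, ?_⟩
  · rw [← coe_substAlgHom hs]
    exact (isUnit_exp A).map _
  · rw [derivative_subst hs, derivative_exp, derivative_integral, mul_comm]

end LinearODE

variable {R : Type*} [CommSemiring R]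

def swap : R⟦X⟧⟦X⟧ ≃+* R⟦X⟧⟦X⟧ where
  toFun F := mk fun i => mk fun n => coeff i (coeff n F)
  invFun F := mk fun i => mk fun n => coeff i (coeff n F)
  left_inv F := by ext; simp
  right_inv F := by ext; simp
  map_mul' F G := by
    ext i n
    simp only [coeff_mk, coeff_mul, map_sum]
    exact Finset.sum_comm
  map_add' F G := by ext; simp

@[simp]
theorem coeff_coeff_swap (F : R⟦X⟧⟦X⟧) (i n : ℕ) :
    coeff n (coeff i (swap F)) = coeff i (coeff n F) := by
  simp [swap]

theorem coeff_swap_derivative (F : R⟦X⟧⟦X⟧) (i : ℕ) :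
    coeff i (swap (d⁄dX R⟦X⟧ F)) = d⁄dX R (coeff i (swap F)) := by
  ext n
  rw [coeff_coeff_swap, coeff_derivative, coeff_derivative, coeff_coeff_swap,
    show ((n : R⟦X⟧) + 1) = C ((n : R) + 1) by simp, coeff_mul_C]

end PowerSeries

theorem mem_Oz_iff (f : K) : f ∈ Oz ↔ ∀ n : ℤ, n < 0 → f.coeff n = 0 := by
  rw [Oz, RingHom.mem_range, ← LaurentSeries.val_le_one_iff_eq_coe, ← WithZero.exp_zero,
    ← neg_zero, LaurentSeries.valuation_le_iff_coeff_lt_eq_zero, neg_zero]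

theorem lD_ofPowerSeries (f : PowerSeries ℂ) :
    lD (HahnSeries.ofPowerSeries ℤ ℂ f) = HahnSeries.ofPowerSeries ℤ ℂ (d⁄dX ℂ f) := by
  ext n
  show ((n : ℂ) + 1) * _ = _
  rw [PowerSeries.coeff_coe, PowerSeries.coeff_coe]
  rcases lt_trichotomy n (-1) with hn | rfl | hn
  · rw [if_pos (by omega), if_pos (by omega), mul_zero]
  · simp
  · lift n to ℕ using (by omega)
    rw [if_neg (by omega), if_neg (by omega), coeff_derivative, ← Nat.cast_succ, Int.natAbs_natCast,
      Int.natAbs_natCast, mul_comm, Int.cast_natCast]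

theorem coeff_zK_mul (f : K) (n : ℤ) : (zK * f).coeff (n + 1) = f.coeff n := by
  rw [zK, HahnSeries.ofPowerSeries_X, HahnSeries.coeff_single_mul_add, one_mul]

theorem mem_Oz_of_zK_mul_mem {f : K} (hf : zK * f ∈ Oz) (hres : res f = 0) : f ∈ Oz := by
  rw [mem_Oz_iff] at hf ⊢
  intro n hn
  obtain rfl | hn := (Int.le_sub_one_of_lt hn).eq_or_lt
  · exact hres
  · rw [← coeff_zK_mul, hf _ (by omega)]

theorem MemOhat.sub {F G : Khat} (hF : MemOhat F) (hG : MemOhat G) : MemOhat (F - G) :=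
  fun i => by rw [map_sub]; exact Oz.sub_mem (hF i) (hG i)

theorem resHat_sub (F G : Khat) : resHat (F - G) = resHat F - resHat G := by
  ext i
  simp [resHat, res]

theorem MemOhat.of_C_zK_mul {F : Khat} (hF : MemOhat (C zK * F)) (hres : resHat F = 0) :
    MemOhat F := fun i =>
  mem_Oz_of_zK_mul_mem (by rw [← coeff_C_mul]; exact hF i)
    (by simpa [resHat] using congrArg (coeff i) hres)

theorem MemOhat.exists_eq_X_mul {F : Khat} (hF : MemOhat F) (h0 : ev0 F = 0) :
    ∃ G : Khat, MemOhat G ∧ F = X * G := by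
  obtain ⟨G, rfl⟩ := X_dvd_iff.mpr h0
  exact ⟨G, fun i => by simpa only [coeff_succ_X_mul] using hF (i + 1), rfl⟩

-- `F ∈ ℂ[[λ]][[z]]` is sent to `Σᵢ (Σₙ [zⁿλⁱ]F · zⁿ) λⁱ ∈ ℂ((z))[[λ]]`.
def toKhat : (PowerSeries ℂ)⟦X⟧ →+* Khat :=
  (map (HahnSeries.ofPowerSeries ℤ ℂ)).comp PowerSeries.swap.toRingHom

theorem coeff_toKhat (F : (PowerSeries ℂ)⟦X⟧) (i : ℕ) :
    coeff i (toKhat F) = HahnSeries.ofPowerSeries ℤ ℂ (coeff i (PowerSeries.swap F)) := by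
  simp [toKhat]

theorem memOhat_toKhat (F : (PowerSeries ℂ)⟦X⟧) : MemOhat (toKhat F) :=
  fun i => coeff_toKhat F i ▸ ⟨_, rfl⟩

theorem MemOhat.exists_toKhat_eq {F : Khat} (hF : MemOhat F) : ∃ G, toKhat G = F := by
  choose f hf using hF
  refine ⟨PowerSeries.swap.symm (mk f), ?_⟩
  ext1 i
  rw [coeff_toKhat, RingEquiv.apply_symm_apply, coeff_mk, hf]

theorem pD_toKhat (F : (PowerSeries ℂ)⟦X⟧) : pD (toKhat F) = toKhat (d⁄dX _ F) := by
  ext1 i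
  rw [pD, coeff_mk, coeff_toKhat, coeff_toKhat, coeff_swap_derivative, lD_ofPowerSeries]

theorem IsUnit.exists_memOhat_toKhat_mul_eq_one {F : (PowerSeries ℂ)⟦X⟧} (hF : IsUnit F) :
    ∃ s : Khat, MemOhat s ∧ toKhat F * s = 1 := by
  obtain ⟨u, rfl⟩ := hF
  exact ⟨toKhat ↑u⁻¹, memOhat_toKhat _, by rw [← map_mul, Units.mul_inv, map_one]⟩

/-- If `a, a' ∈ ℂ((z))[[λ]]` both satisfy `z·a, z·a' ∈ ℂ[[z,λ]]`,
`res a = res a' = -λ/2` and `a(z,0) = a'(z,0)`, then `a' = a + λ·r⁻¹·(dr/dz)` for some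
unit `r` of `ℂ[[z,λ]]`. -/
theorem stmt11 (a a' : Khat)
    (ha : MemOhat (PowerSeries.C (R := K) zK * a)) (ha' : MemOhat (PowerSeries.C (R := K) zK * a'))
    (hres : resHat a = negHalfLam) (hres' : resHat a' = negHalfLam)
    (h0 : ev0 a = ev0 a') :
    ∃ r : Khat, MemOhat r ∧ (∃ s : Khat, MemOhat s ∧ r * s = 1) ∧
      a' = a + PowerSeries.X * (r⁻¹ * pD r) := by
  have hb : MemOhat (a' - a) :=
    MemOhat.of_C_zK_mul (by rw [mul_sub]; exact ha'.sub ha)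
      (by rw [resHat_sub, hres, hres', sub_self])
  obtain ⟨g, hg, hbg⟩ := hb.exists_eq_X_mul (by rw [map_sub, h0, sub_self])
  obtain ⟨G, rfl⟩ := hg.exists_toKhat_eq
  obtain ⟨R, hRunit, hR⟩ := PowerSeries.exists_isUnit_derivative_eq_mul G
  obtain ⟨s, hs, hrs⟩ := hRunit.exists_memOhat_toKhat_mul_eq_one
  have hr : (toKhat R)⁻¹ * toKhat R = 1 :=
    PowerSeries.inv_mul_cancel _ (left_ne_zero_of_mul_eq_one (by rw [← map_mul, hrs, map_one]))
  refine ⟨toKhat R, memOhat_toKhat R, ⟨s, hs, hrs⟩, ?_⟩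
  rw [pD_toKhat, hR, map_mul]
  linear_combination hbg - X * toKhat G * hr

end
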